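/- For all ξ, η ∈ SⁿV, ζ_Vⁿ(ξ₊η₋) = n!·⟨ξ|η⟩, where ζ_V ∈ S²V_ℂ' is the canonical quadratic given by ζ_V(xy) = ⟨y|x̄⟩ for x, y ∈ V_ℂ. -/

import Mathlib

open scoped ComplexConjugate

noncomputable section

section Defs

variable {V W A : Type} [AddCommGroup V] [Module ℂ V] [CommRing A] [Algebra ℂ A]

/-- `A` (with embedding `ι`) is the symmetric algebra of `V`: universal property. -/
def IsSymmAlg (ι : V →ₗ[ℂ] A) : Prop :=
  ∀ (B : Type) [CommRing B] [Algebra ℂ B] (f : V →ₗ[ℂ] B),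
    ∃! F : A →ₐ[ℂ] B, ∀ v, F (ι v) = f v

/-- The span of `n`-fold products of generators: the degree-`n` part. -/
def GradeOf (gen : W → A) (n : ℕ) : Submodule ℂ A :=
  Submodule.span ℂ {a | ∃ f : Fin n → W, a = ∏ i, gen (f i)}

/-- The algebra is spanned by products of generators. -/
def SpanProdsOf (gen : W → A) : Prop :=
  ∀ x : A, x ∈ Submodule.span ℂ {a | ∃ (n : ℕ) (f : Fin n → W), a = ∏ i, gen (f i)}

/-- A quadratic: an antilinear functional concentrated in degree 2. -/
def IsQuadOf (gen : W → A) (ζ : A →ₗ⋆[ℂ] ℂ) : Prop :=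
  ∀ n : ℕ, n ≠ 2 → ∀ φ ∈ GradeOf gen n, ζ φ = 0

/-- The commutative product on the full antidual induced by the coproduct,
characterized on products of generators. -/
def IsConvProdOf (gen : W → A)
    (mul : (A →ₗ⋆[ℂ] ℂ) → (A →ₗ⋆[ℂ] ℂ) → (A →ₗ⋆[ℂ] ℂ)) : Prop :=
  ∀ (Φ Ψ : A →ₗ⋆[ℂ] ℂ) (n : ℕ) (v : Fin n → W),
    mul Φ Ψ (∏ i, gen (v i)) =
      ∑ S : Finset (Fin n), Φ (∏ i ∈ S, gen (v i)) * Ψ (∏ i ∈ Sᶜ, gen (v i))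

/-- The counit (unit of the antidual algebra): kills products of at least one generator. -/
def IsCounitOf (gen : W → A) (ε : A →ₗ⋆[ℂ] ℂ) : Prop :=
  ∀ (n : ℕ) (v : Fin n → W), ε (∏ i, gen (v i)) = if n = 0 then 1 else 0

/-- Powers of a functional with respect to the convolution product. -/
def powD (mul : (A →ₗ⋆[ℂ] ℂ) → (A →ₗ⋆[ℂ] ℂ) → (A →ₗ⋆[ℂ] ℂ))
    (ε ζ : A →ₗ⋆[ℂ] ℂ) : ℕ → (A →ₗ⋆[ℂ] ℂ)
  | 0 => ε
  | n + 1 => mul ζ (powD mul ε ζ n)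

/-- `E` is the Gaussian `exp ζ = Σ ζⁿ/n!` (a finite sum in each degree). -/
def IsGaussianOf (gen : W → A)
    (mul : (A →ₗ⋆[ℂ] ℂ) → (A →ₗ⋆[ℂ] ℂ) → (A →ₗ⋆[ℂ] ℂ))
    (ε ζ E : A →ₗ⋆[ℂ] ℂ) : Prop :=
  ∀ k : ℕ, ∀ ψ ∈ GradeOf gen k,
    E ψ = ∑ n ∈ Finset.range (k + 1), ((n.factorial : ℂ))⁻¹ * powD mul ε ζ n ψ

end Defs

section Defs2

variable {V A : Type} [NormedAddCommGroup V] [InnerProductSpace ℂ V]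
  [CommRing A] [Algebra ℂ A]

/-- The family of annihilation operators: derivations killing `1` with
`a v (ι w) = ⟨v|w⟩ 1`. -/
def IsAnn (ι : V →ₗ[ℂ] A) (a : V → A →ₗ[ℂ] A) : Prop :=
  ∀ v : V, (∀ x y : A, a v (x * y) = a v x * y + x * a v y) ∧
    a v 1 = 0 ∧ ∀ w : V, a v (ι w) = (inner ℂ v w : ℂ) • (1 : A)

/-- The canonical inner product on the symmetric algebra: graded pieces are
orthogonal and the permanent formula holds. (Antilinear in the first slot.) -/
def IsCanonInner (ι : V →ₗ[ℂ] A) (Bf : A →ₗ⋆[ℂ] A →ₗ[ℂ] ℂ) : Prop :=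
  (∀ (k n : ℕ), k ≠ n → ∀ (x : Fin k → V) (y : Fin n → V),
      Bf (∏ i, ι (x i)) (∏ i, ι (y i)) = 0) ∧
  ∀ (n : ℕ) (x y : Fin n → V),
      Bf (∏ i, ι (x i)) (∏ i, ι (y i)) =
        ∑ p : Equiv.Perm (Fin n), ∏ i, (inner ℂ (x i) (y (p i)) : ℂ)

/-- Iterated annihilation `a(vₙ)⋯a(v₁)φ` (applying `a(v₁)` first). -/
def iterAnn (a : V → A →ₗ[ℂ] A) : (n : ℕ) → (Fin n → V) → A → A
  | 0, _, φ => φ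
  | n + 1, v, φ => a (v (Fin.last n)) (iterAnn a n (fun i => v i.castSucc) φ)

/-- A symmetric bi-antilinear map `V × V → ℂ`. -/
def IsSymAnti (Z : V → V → ℂ) : Prop :=
  (∀ x y, Z x y = Z y x) ∧
  (∀ x y y', Z x (y + y') = Z x y + Z x y') ∧
  (∀ (c : ℂ) (x y : V), Z x (c • y) = conj c * Z x y)

end Defs2

section DefsC

variable {A AC : Type} [CommRing A] [Algebra ℂ A] [CommRing AC] [Algebra ℂ AC]

/-- An antilinear (conjugate-linear) algebra morphism, such as `φ ↦ φ₋`. -/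
def IsAntiAlgHom (m : A → AC) : Prop :=
  (∀ x y : A, m (x + y) = m x + m y) ∧ (∀ (c : ℂ) (x : A), m (c • x) = conj c • m x) ∧
  (∀ x y : A, m (x * y) = m x * m y) ∧ m 1 = 1

end DefsC

/-!
By sesquilinearity it suffices to take `ξ = x₁⋯xₙ` and `η = y₁⋯yₙ`. Since `ζ_V` is a quadratic,
the coproduct formula writes `ζ_V^{n+1}(ξ₊η₋)` as a sum over the two-element subsets of the
`2n + 2` generators of `ξ₊η₋`; the pure pairs `{x_i₊, x_k₊}` and `{y_j₋, y_l₋}` are killed by `ζ_V`,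
and a mixed pair `{x_i₊, y_j₋}` contributes `⟨x_i|y_j⟩ ζ_Vⁿ` of the remaining factors, which by
induction is `⟨x_i|y_j⟩ n!` times the permanent of the `(i, j)` minor of `(⟨x_k|y_l⟩)`. Expanding
the permanent along each of the `n + 1` rows, the double sum is `(n + 1)!` times the permanent,
which is the canonical inner product `⟨ξ|η⟩`.
-/

open Finset
open scoped Nat

namespace Fin

variable {n : ℕ}

def permOfSuccAbove (i j : Fin (n + 1)) (τ : Equiv.Perm (Fin n)) : Equiv.Perm (Fin (n + 1)) :=
  ((finSuccEquiv' i).trans τ.optionCongr).trans (finSuccEquiv' j).symm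

@[simp]
lemma permOfSuccAbove_apply_self (i j : Fin (n + 1)) (τ : Equiv.Perm (Fin n)) :
    permOfSuccAbove i j τ i = j := by
  simp [permOfSuccAbove]

@[simp]
lemma permOfSuccAbove_apply_succAbove (i j : Fin (n + 1)) (τ : Equiv.Perm (Fin n)) (k : Fin n) :
    permOfSuccAbove i j τ (i.succAbove k) = j.succAbove (τ k) := by
  simp [permOfSuccAbove]

lemma permOfSuccAbove_bijective (i : Fin (n + 1)) :
    Function.Bijective fun q : Fin (n + 1) × Equiv.Perm (Fin n) => permOfSuccAbove i q.1 q.2 := by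
  refine (Fintype.bijective_iff_injective_and_card _).2 ⟨?_, by
    simp [Fintype.card_perm, Nat.factorial_succ]⟩
  rintro ⟨j, τ⟩ ⟨j', τ'⟩ h
  obtain rfl : j = j' := by simpa using DFunLike.congr_fun h i
  refine Prod.ext rfl (Equiv.ext fun k => (j.succAbove_right_injective ?_))
  simpa using DFunLike.congr_fun h (i.succAbove k)

end Fin

namespace Matrix

variable {R : Type*} [CommSemiring R] {n : ℕ}

theorem permanent_succ_column (A : Matrix (Fin (n + 1)) (Fin (n + 1)) R) (j : Fin (n + 1)) :
    permanent A = ∑ i, A i j * permanent (A.submatrix i.succAbove j.succAbove) := by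
  simp only [permanent, mul_sum]
  rw [← Fintype.sum_bijective _ (Fin.permOfSuccAbove_bijective j) _ _ fun _ => rfl,
    Fintype.sum_prod_type]
  refine sum_congr rfl fun i _ => sum_congr rfl fun τ _ => ?_
  rw [Fin.prod_univ_succAbove _ j]
  simp

theorem permanent_succ_row (A : Matrix (Fin (n + 1)) (Fin (n + 1)) R) (i : Fin (n + 1)) :
    permanent A = ∑ j, A i j * permanent (A.submatrix i.succAbove j.succAbove) := by
  rw [← permanent_transpose, permanent_succ_column Aᵀ i]
  simp [← transpose_submatrix, permanent_transpose]

end Matrix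

section Convolution

variable {W A : Type} [CommRing A] [Algebra ℂ A] {gen : W → A}
  {mul : (A →ₗ⋆[ℂ] ℂ) → (A →ₗ⋆[ℂ] ℂ) → (A →ₗ⋆[ℂ] ℂ)}

lemma prod_mem_gradeOf {ι : Type*} (v : ι → W) (s : Finset ι) :
    ∏ t ∈ s, gen (v t) ∈ GradeOf gen #s := by
  refine Submodule.subset_span ⟨fun k => v (s.equivFin.symm k), ?_⟩
  rw [← prod_coe_sort, ← s.equivFin.symm.prod_comp]

variable {ι : Type*} [Fintype ι] [DecidableEq ι]

lemma IsConvProdOf.apply_prod (hmul : IsConvProdOf gen mul) (Φ Ψ : A →ₗ⋆[ℂ] ℂ) (v : ι → W) :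
    mul Φ Ψ (∏ t, gen (v t)) =
      ∑ S : Finset ι, Φ (∏ t ∈ S, gen (v t)) * Ψ (∏ t ∈ Sᶜ, gen (v t)) := by
  let e := Fintype.equivFin ι
  rw [← e.symm.prod_comp, hmul]
  refine (Fintype.sum_equiv e.finsetCongr _ _ fun S => ?_).symm
  have hcompl : (S.map e.toEmbedding)ᶜ = Sᶜ.map e.toEmbedding := by
    ext k
    simp
  simp [Equiv.finsetCongr_apply, hcompl]

lemma IsQuadOf.convProd_apply_prod {ζ : A →ₗ⋆[ℂ] ℂ} (hζ : IsQuadOf gen ζ)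
    (hmul : IsConvProdOf gen mul) (Ψ : A →ₗ⋆[ℂ] ℂ) (v : ι → W) :
    mul ζ Ψ (∏ t, gen (v t)) =
      ∑ S ∈ powersetCard 2 univ, ζ (∏ t ∈ S, gen (v t)) * Ψ (∏ t ∈ Sᶜ, gen (v t)) := by
  rw [hmul.apply_prod, powersetCard_eq_filter, powerset_univ, sum_filter]
  refine sum_congr rfl fun S _ => ?_
  split_ifs with h
  · rfl
  · rw [hζ _ h _ (prod_mem_gradeOf v S), zero_mul]

end Convolution

section SumType

variable {α β M : Type*} [Fintype α] [Fintype β] [DecidableEq α] [DecidableEq β]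

lemma sum_powersetCard_two_sum [AddCommMonoid M] (f : Finset (α ⊕ β) → M)
    (hl : ∀ a a', a ≠ a' → f {.inl a, .inl a'} = 0)
    (hr : ∀ b b', b ≠ b' → f {.inr b, .inr b'} = 0) :
    ∑ S ∈ powersetCard 2 univ, f S = ∑ a, ∑ b, f {.inl a, .inr b} := by
  let g : α × β → Finset (α ⊕ β) := fun q => {.inl q.1, .inr q.2}
  have hg : Function.Injective g := by
    rintro ⟨a, b⟩ ⟨a', b'⟩ h
    have ha : .inl a ∈ g (a', b') := h ▸ mem_insert_self _ _
    have hb : .inr b ∈ g (a', b') := h ▸ mem_insert_of_mem (mem_singleton_self _)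
    simp_all [g]
  rw [← Fintype.sum_prod_type', ← sum_image fun q _ q' _ h => hg h]
  refine (sum_subset (fun S hS => ?_) fun S hS hSg => ?_).symm
  · obtain ⟨q, -, rfl⟩ := mem_image.1 hS
    simp [g]
  · obtain ⟨x, y, hxy, rfl⟩ := card_eq_two.1 (mem_powersetCard.1 hS).2
    rcases x with a | b <;> rcases y with a' | b'
    · exact hl a a' (by simpa using hxy)
    · exact absurd (mem_image.2 ⟨(a, b'), mem_univ _, rfl⟩) hSg
    · exact absurd (mem_image.2 ⟨(a', b), mem_univ _, pair_comm _ _⟩) hSg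
    · exact hr b b' (by simpa using hxy)

lemma prod_compl_pair_sum_elim [CommMonoid M] {n n' : ℕ} (f : Fin (n + 1) → M)
    (g : Fin (n' + 1) → M) (i : Fin (n + 1)) (j : Fin (n' + 1)) :
    ∏ t ∈ {.inl i, .inr j}ᶜ, Sum.elim f g t =
      (∏ k, f (i.succAbove k)) * ∏ k, g (j.succAbove k) := by
  have hcompl : ({.inl i, .inr j} : Finset (Fin (n + 1) ⊕ Fin (n' + 1)))ᶜ =
      Finset.disjSum {i}ᶜ {j}ᶜ := by
    ext (_ | _) <;> simp
  rw [hcompl, prod_disjSum, ← Fin.image_succAbove_univ, ← Fin.image_succAbove_univ,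
    prod_image Fin.succAbove_right_injective.injOn, prod_image Fin.succAbove_right_injective.injOn]
  rfl

end SumType

section AntiAlgHom

variable {A AC : Type} [CommRing A] [Algebra ℂ A] [CommRing AC] [Algebra ℂ AC] {m : A → AC}

lemma IsAntiAlgHom.map_prod (hm : IsAntiAlgHom m) {ι : Type*} (s : Finset ι) (f : ι → A) :
    m (∏ i ∈ s, f i) = ∏ i ∈ s, m (f i) :=
  _root_.map_prod (MonoidHom.mk ⟨m, hm.2.2.2⟩ hm.2.2.1) f s

lemma IsAntiAlgHom.map_zero (hm : IsAntiAlgHom m) : m 0 = 0 := by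
  simpa using (hm.1 0 0).symm

lemma IsAntiAlgHom.apply_mul_eq_of_mem_span (hm : IsAntiAlgHom m) (p : A →ₐ[ℂ] AC)
    (Φ : AC →ₗ⋆[ℂ] ℂ) (B : A →ₗ⋆[ℂ] A →ₗ[ℂ] ℂ) (c : ℂ) {s t : Set A}
    (h : ∀ ξ ∈ s, ∀ η ∈ t, Φ (p ξ * m η) = c * B ξ η) {ξ η : A}
    (hξ : ξ ∈ Submodule.span ℂ s) (hη : η ∈ Submodule.span ℂ t) :
    Φ (p ξ * m η) = c * B ξ η := by
  induction hξ, hη using Submodule.span_induction₂ with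
  | mem_mem ξ η hξ hη => exact h ξ hξ η hη
  | zero_left η _ => simp
  | zero_right ξ _ => simp [hm.map_zero]
  | add_left ξ ξ' η _ _ _ h₁ h₂ => simp [add_mul, h₁, h₂, mul_add]
  | add_right ξ η η' _ _ _ h₁ h₂ => simp [hm.1, mul_add, h₁, h₂]
  | smul_left a ξ η _ _ h₁ => simp [h₁, mul_left_comm]
  | smul_right a ξ η _ _ h₁ => simp [hm.2.1, h₁, mul_left_comm]

end AntiAlgHom

section CanonicalQuadratic

variable {V A AC : Type} [NormedAddCommGroup V] [InnerProductSpace ℂ V]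
  [CommRing A] [Algebra ℂ A] [CommRing AC] [Algebra ℂ AC]
  {ι : V →ₗ[ℂ] A} {p : A →ₐ[ℂ] AC} {m : A → AC} {gen : V ⊕ V → AC}
  {mulC : (AC →ₗ⋆[ℂ] ℂ) → (AC →ₗ⋆[ℂ] ℂ) → (AC →ₗ⋆[ℂ] ℂ)} {εC ζV : AC →ₗ⋆[ℂ] ℂ}

lemma IsCanonInner.apply_prod {Bf : A →ₗ⋆[ℂ] A →ₗ[ℂ] ℂ} (hB : IsCanonInner ι Bf) {n : ℕ}
    (x y : Fin n → V) :
    Bf (∏ i, ι (x i)) (∏ i, ι (y i)) = (Matrix.of fun i j => inner ℂ (x i) (y j)).permanent := by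
  rw [hB.2, ← Matrix.permanent_transpose]
  rfl

lemma powD_succ_apply_prod_mul_prod (hm : IsAntiAlgHom m)
    (hgen : ∀ w : V ⊕ V, gen w = Sum.elim (fun v => p (ι v)) (fun v => m (ι v)) w)
    (hmulC : IsConvProdOf gen mulC) (hζq : IsQuadOf gen ζV)
    (hζpm : ∀ x y : V, ζV (p (ι x) * m (ι y)) = (inner ℂ x y : ℂ))
    (hζpp : ∀ x y : V, ζV (p (ι x) * p (ι y)) = 0)
    (hζmm : ∀ x y : V, ζV (m (ι x) * m (ι y)) = 0) {n : ℕ} (x y : Fin (n + 1) → V) :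
    powD mulC εC ζV (n + 1) (p (∏ i, ι (x i)) * m (∏ j, ι (y j))) =
      ∑ i, ∑ j, inner ℂ (x i) (y j) * powD mulC εC ζV n
        (p (∏ k, ι (x (i.succAbove k))) * m (∏ k, ι (y (j.succAbove k)))) := by
  have hprod (s : Finset (Fin (n + 1) ⊕ Fin (n + 1))) : ∏ t ∈ s, gen (Sum.map x y t) =
      ∏ t ∈ s, Sum.elim (fun i => p (ι (x i))) (fun j => m (ι (y j))) t :=
    prod_congr rfl fun t _ => by cases t <;> simp [hgen]
  have hfull : p (∏ i, ι (x i)) * m (∏ j, ι (y j)) = ∏ t, gen (Sum.map x y t) := by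
    rw [hprod, Fintype.prod_sum_type, map_prod, hm.map_prod]
    rfl
  rw [powD, hfull, hζq.convProd_apply_prod hmulC, sum_powersetCard_two_sum]
  · refine sum_congr rfl fun i _ => sum_congr rfl fun j _ => ?_
    rw [hprod, hprod, prod_pair Sum.inl_ne_inr, prod_compl_pair_sum_elim, Sum.elim_inl,
      Sum.elim_inr, hζpm, map_prod, hm.map_prod]
  · intro a a' ha
    simp [hprod, prod_pair (Sum.inl_injective.ne ha), hζpp]
  · intro b b' hb
    simp [hprod, prod_pair (Sum.inr_injective.ne hb), hζmm]

open Matrix in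
lemma powD_apply_prod_mul_prod (hm : IsAntiAlgHom m)
    (hgen : ∀ w : V ⊕ V, gen w = Sum.elim (fun v => p (ι v)) (fun v => m (ι v)) w)
    (hmulC : IsConvProdOf gen mulC) (hεC : IsCounitOf gen εC) (hζq : IsQuadOf gen ζV)
    (hζpm : ∀ x y : V, ζV (p (ι x) * m (ι y)) = (inner ℂ x y : ℂ))
    (hζpp : ∀ x y : V, ζV (p (ι x) * p (ι y)) = 0)
    (hζmm : ∀ x y : V, ζV (m (ι x) * m (ι y)) = 0) (n : ℕ) (x y : Fin n → V) :
    powD mulC εC ζV n (p (∏ i, ι (x i)) * m (∏ j, ι (y j))) =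
      n ! * (of fun i j => inner ℂ (x i) (y j)).permanent := by
  induction n with
  | zero => simpa [powD, hm.2.2.2, permanent_isEmpty] using hεC 0 Fin.elim0
  | succ n ih =>
    set M : Matrix (Fin (n + 1)) (Fin (n + 1)) ℂ := of fun i j => inner ℂ (x i) (y j)
    calc _ = ∑ i, ∑ j, M i j * (n ! * (M.submatrix i.succAbove j.succAbove).permanent) := by
          simp only [powD_succ_apply_prod_mul_prod hm hgen hmulC hζq hζpm hζpp hζmm, ih]
          rfl
      _ = ∑ _i : Fin (n + 1), n ! * M.permanent := by
          refine sum_congr rfl fun i _ => ?_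
          rw [permanent_succ_row M i, mul_sum]
          exact sum_congr rfl fun j _ => mul_left_comm _ _ _
      _ = (n + 1)! * M.permanent := by
          rw [sum_const, card_univ, Fintype.card_fin, nsmul_eq_mul, Nat.factorial_succ]
          push_cast
          ring

end CanonicalQuadratic

theorem canonical_quadratic_power_general {V A AC : Type}
    [NormedAddCommGroup V] [InnerProductSpace ℂ V]
    [CommRing A] [Algebra ℂ A] [CommRing AC] [Algebra ℂ AC]
    (ι : V →ₗ[ℂ] A)
    (Bf : A →ₗ⋆[ℂ] A →ₗ[ℂ] ℂ) (hB : IsCanonInner ι Bf)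
    (p : A →ₐ[ℂ] AC) (m : A → AC) (hm : IsAntiAlgHom m)
    -- the generators of `SV_ℂ`: the images of `V₊` and of `V₋`
    (gen : V ⊕ V → AC)
    (hgen : ∀ w : V ⊕ V, gen w = Sum.elim (fun v => p (ι v)) (fun v => m (ι v)) w)
    (mulC : (AC →ₗ⋆[ℂ] ℂ) → (AC →ₗ⋆[ℂ] ℂ) → (AC →ₗ⋆[ℂ] ℂ))
    (hmulC : IsConvProdOf gen mulC)
    (εC : AC →ₗ⋆[ℂ] ℂ) (hεC : IsCounitOf gen εC)
    -- the canonical quadratic ζ_V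
    (ζV : AC →ₗ⋆[ℂ] ℂ) (hζq : IsQuadOf gen ζV)
    (hζpm : ∀ x y : V, ζV (p (ι x) * m (ι y)) = (inner ℂ x y : ℂ))
    (hζpp : ∀ x y : V, ζV (p (ι x) * p (ι y)) = 0)
    (hζmm : ∀ x y : V, ζV (m (ι x) * m (ι y)) = 0) :
    ∀ (n : ℕ) (ξ η : A), ξ ∈ GradeOf (fun w => ι w) n → η ∈ GradeOf (fun w => ι w) n →
      powD mulC εC ζV n (p ξ * m η) = (n.factorial : ℂ) * Bf ξ η := by
  intro n ξ η hξ hη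
  refine hm.apply_mul_eq_of_mem_span p _ Bf _ ?_ hξ hη
  rintro _ ⟨x, rfl⟩ _ ⟨y, rfl⟩
  rw [powD_apply_prod_mul_prod hm hgen hmulC hεC hζq hζpm hζpp hζmm, hB.apply_prod]

/-- For `ξ, η ∈ SⁿV`: `ζ_Vⁿ(ξ₊η₋) = n!·⟨ξ|η⟩`, where `ζ_V` is the canonical
quadratic of `SV_ℂ'` (given on generators by `ζ_V(x₊y₋) = ⟨x|y⟩`,
`ζ_V(x₊y₊) = ζ_V(x₋y₋) = 0`) and `⟨·|·⟩` is the canonical inner product. -/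
theorem canonical_quadratic_power {V A AC : Type}
    [NormedAddCommGroup V] [InnerProductSpace ℂ V] [CompleteSpace V]
    [CommRing A] [Algebra ℂ A] [CommRing AC] [Algebra ℂ AC]
    (ι : V →ₗ[ℂ] A) (hA : IsSymmAlg ι)
    (Bf : A →ₗ⋆[ℂ] A →ₗ[ℂ] ℂ) (hB : IsCanonInner ι Bf)
    (p : A →ₐ[ℂ] AC) (m : A → AC) (hm : IsAntiAlgHom m)
    -- the generators of `SV_ℂ`: the images of `V₊` and of `V₋`
    (gen : V ⊕ V → AC)
    (hgen : ∀ w : V ⊕ V, gen w = Sum.elim (fun v => p (ι v)) (fun v => m (ι v)) w)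
    (hspanC : SpanProdsOf gen)
    (mulC : (AC →ₗ⋆[ℂ] ℂ) → (AC →ₗ⋆[ℂ] ℂ) → (AC →ₗ⋆[ℂ] ℂ))
    (hmulC : IsConvProdOf gen mulC)
    (εC : AC →ₗ⋆[ℂ] ℂ) (hεC : IsCounitOf gen εC)
    -- the canonical quadratic ζ_V
    (ζV : AC →ₗ⋆[ℂ] ℂ) (hζq : IsQuadOf gen ζV)
    (hζpm : ∀ x y : V, ζV (p (ι x) * m (ι y)) = (inner ℂ x y : ℂ))
    (hζpp : ∀ x y : V, ζV (p (ι x) * p (ι y)) = 0)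
    (hζmm : ∀ x y : V, ζV (m (ι x) * m (ι y)) = 0) :
    ∀ (n : ℕ) (ξ η : A), ξ ∈ GradeOf (fun w => ι w) n → η ∈ GradeOf (fun w => ι w) n →
      powD mulC εC ζV n (p ξ * m η) = (n.factorial : ℂ) * Bf ξ η :=
  canonical_quadratic_power_general ι Bf hB p m hm gen hgen mulC hmulC εC hεC ζV hζq hζpm hζpp hζmm
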